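/- Let X be a locally connected topological space and G an abelian group. Then L(X, G) ≅ G^{⊕ π₀(X)}, the direct sum of copies of G indexed by the set of connected components of X, where G also denotes the constant sheaf with value G. -/

import Mathlib

/-!
Composing `L ⊣ π⁻¹` with `π⁻¹ ⊣ Γ(X, -)` makes `L(X, π⁻¹ G)` corepresent
`A ↦ Hom(G, Γ(X, π⁻¹ A))`. The constant presheaf maps locally bijectively to the sheaf of
locally constant functions, so `π⁻¹ A` is that sheaf, and on a locally connected space its
global sections are `A ^ π₀(X)`. As `Hom(G, A ^ π₀(X)) = Hom(⨁_{π₀(X)} G, A)`, Yoneda identifies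
`L(X, π⁻¹ G)` with `⨁_{π₀(X)} G`.
-/

open CategoryTheory CategoryTheory.Limits TopologicalSpace DirectSum Opposite

universe u

namespace ConnectedComponents

variable (Y : Type*) [TopologicalSpace Y] [LocallyConnectedSpace Y] (A : Type*) [AddZeroClass A]

def piToLocallyConstant : (ConnectedComponents Y → A) →+ LocallyConstant Y A where
  toFun g := ⟨g ∘ mk, (IsLocallyConstant.of_discrete g).comp_continuous continuous_coe⟩
  map_zero' := rfl
  map_add' _ _ := rfl

theorem piToLocallyConstant_bijective : Function.Bijective (piToLocallyConstant Y A) := by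
  refine ⟨fun g g' h => surjective_coe.injective_comp_right (congrArg DFunLike.coe h),
    fun f => ⟨Quotient.lift f fun a b hab => ?_, rfl⟩⟩
  exact f.isLocallyConstant.apply_eq_of_isPreconnected isPreconnected_connectedComponent
    mem_connectedComponent (coe_eq_coe'.mp (Quotient.sound hab).symm)

noncomputable def piAddEquivLocallyConstant :
    (ConnectedComponents Y → A) ≃+ LocallyConstant Y A :=
  AddEquiv.ofBijective _ (piToLocallyConstant_bijective Y A)

end ConnectedComponents

namespace AddCommGrpCat

def piConst (ι : Type u) : AddCommGrpCat.{u} ⥤ AddCommGrpCat.{u} where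
  obj A := of (ι → A)
  map f := ofHom (AddMonoidHom.compLeft f.hom ι)

def directSumCorepresentableBy (ι : Type u) [DecidableEq ι] (G : AddCommGrpCat.{u}) :
    (piConst ι ⋙ CategoryTheory.coyoneda.obj (op G)).CorepresentableBy (of (⨁ _ : ι, G)) where
  homEquiv {A} :=
    { toFun f := ofHom (AddMonoidHom.pi fun i => f.hom.comp (DirectSum.of (fun _ => G) i))
      invFun g := ofHom (DirectSum.toAddMonoid fun i => (Pi.evalAddMonoidHom _ i).comp g.hom)
      left_inv f := by
        ext : 1
        refine DirectSum.addHom_ext fun i b => ?_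
        simp only [hom_ofHom, DirectSum.toAddMonoid_of]
        rfl
      right_inv g := by
        refine AddCommGrpCat.hom_ext (AddMonoidHom.ext fun b => funext fun i => ?_)
        simp only [hom_ofHom, AddMonoidHom.pi_apply, AddMonoidHom.comp_apply,
          DirectSum.toAddMonoid_of]
        rfl }
  homEquiv_comp _ _ := rfl

end AddCommGrpCat

namespace TopCat

variable (X : TopCat.{u})

def locallyConstantLocal (A : Type*) : LocalPredicate fun _ : X => A where
  pred f := IsLocallyConstant f
  res i _ hf := hf.comp_continuous (continuous_inclusion i.le)
  locality f hf := by
    let : TopologicalSpace A := ⊥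
    have : DiscreteTopology A := ⟨rfl⟩
    simp only [IsLocallyConstant.iff_continuous] at hf ⊢
    exact (continuousLocal X A).locality f hf

def locallyConstantPresheaf : AddCommGrpCat.{u} ⥤ X.Presheaf AddCommGrpCat.{u} where
  obj A :=
    { obj U := AddCommGrpCat.of (LocallyConstant U.unop A)
      map i := AddCommGrpCat.ofHom
        (LocallyConstant.comapAddMonoidHom ⟨i.unop, continuous_inclusion i.unop.le⟩) }
  map f := { app U := AddCommGrpCat.ofHom (LocallyConstant.mapAddMonoidHom f.hom) }

theorem isSheaf_locallyConstantPresheaf (A : AddCommGrpCat.{u}) :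
    ((locallyConstantPresheaf X).obj A).IsSheaf := by
  rw [Presheaf.isSheaf_iff_isSheaf_comp (forget AddCommGrpCat)]
  refine Presheaf.isSheaf_of_iso (NatIso.ofComponents (fun U => Equiv.toIso ?_) ?_)
    (subpresheafToTypes.isSheaf (locallyConstantLocal X A))
  · exact ⟨fun f => (⟨f.1, f.2⟩ : LocallyConstant U.unop A),
      fun f : LocallyConstant U.unop A => ⟨f, f.isLocallyConstant⟩,
      fun _ => rfl, fun _ => rfl⟩
  · exact fun _ => rfl

noncomputable abbrev locallyConstantSheaf :
    AddCommGrpCat.{u} ⥤ CategoryTheory.Sheaf (Opens.grothendieckTopology X) AddCommGrpCat.{u} :=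
  ObjectProperty.lift _ (locallyConstantPresheaf X) (isSheaf_locallyConstantPresheaf X)

def constToLocallyConstant : Functor.const (Opens X)ᵒᵖ ⟶ locallyConstantPresheaf X where
  app A := { app U := AddCommGrpCat.ofHom LocallyConstant.constAddMonoidHom }

instance (A : AddCommGrpCat.{u}) : CategoryTheory.Presheaf.IsLocallyInjective
    (Opens.grothendieckTopology X) ((constToLocallyConstant X).app A) where
  equalizerSieve_mem {U} a b hab x hx := by
    refine ⟨U.unop, 𝟙 _, ?_, hx⟩
    have : a = b := congrArg (fun f : LocallyConstant U.unop A => f ⟨x, hx⟩) hab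
    simp [Presheaf.equalizerSieve, this]

instance (A : AddCommGrpCat.{u}) : CategoryTheory.Presheaf.IsLocallySurjective
    (Opens.grothendieckTopology X) ((constToLocallyConstant X).app A) := by
  rw [← Presheaf.IsLocallySurjective, Presheaf.isLocallySurjective_iff]
  intro U (f : LocallyConstant U A) x hx
  let V : Opens X := ⟨Subtype.val '' (f ⁻¹' {f ⟨x, hx⟩}),
    U.isOpen.isOpenMap_subtype_val _ (f.isLocallyConstant _)⟩
  refine ⟨V, Subtype.coe_image_subset _ _, ⟨f ⟨x, hx⟩, ?_⟩, ⟨⟨x, hx⟩, rfl, rfl⟩⟩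
  refine LocallyConstant.ext ?_
  rintro ⟨_, z, hz, rfl⟩
  exact hz.symm

instance : IsIso (Functor.whiskerRight (constToLocallyConstant X)
    (presheafToSheaf (Opens.grothendieckTopology X) AddCommGrpCat.{u})) :=
  have (A : AddCommGrpCat.{u}) : IsIso ((Functor.whiskerRight (constToLocallyConstant X)
      (presheafToSheaf (Opens.grothendieckTopology X) AddCommGrpCat.{u})).app A) :=
    (GrothendieckTopology.W_iff _ _).mp (GrothendieckTopology.W_of_isLocallyBijective _ _)
  NatIso.isIso_of_isIso_app _

noncomputable def constantSheafIsoLocallyConstantSheaf :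
    constantSheaf (Opens.grothendieckTopology X) AddCommGrpCat.{u} ≅ locallyConstantSheaf X :=
  -- `constantSheaf` is unfolded here, otherwise the `IsIso` instance above is not found.
  (asIso (Functor.whiskerRight (constToLocallyConstant X) (presheafToSheaf _ _)) :
    Functor.const _ ⋙ presheafToSheaf _ _ ≅ _) ≪≫
  (Functor.isoWhiskerLeft (locallyConstantSheaf X) (sheafificationNatIso _ _)).symm

variable [LocallyConnectedSpace X]

noncomputable def piConstIsoLocallyConstantSheafSections :
    AddCommGrpCat.piConst (ConnectedComponents X) ≅
      locallyConstantSheaf X ⋙ (sheafSections (Opens.grothendieckTopology X) _).obj (op ⊤) :=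
  -- The sections over `⊤ : Opens X` are functions on `Set.univ`, identified with `X` below.
  NatIso.ofComponents (fun A =>
    ((ConnectedComponents.piAddEquivLocallyConstant X A).trans
      (LocallyConstant.congrLeftₗ ℤ (Homeomorph.Set.univ X)).symm.toAddEquiv).toAddCommGrpIso)
    fun _ => rfl

noncomputable def constantSheafSectionsIso :
    constantSheaf (Opens.grothendieckTopology X) AddCommGrpCat.{u} ⋙
      (sheafSections (Opens.grothendieckTopology X) _).obj (op ⊤) ≅
      AddCommGrpCat.piConst (ConnectedComponents X) :=
  Functor.isoWhiskerRight (constantSheafIsoLocallyConstantSheaf X) _ ≪≫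
    (piConstIsoLocallyConstantSheafSections X).symm

end TopCat

/-- Let `X` be locally connected, `L(X,-)` the cosections functor (i.e. a left
adjoint of the constant-sheaf functor `π⁻¹ : Ab ⥤ Shv(X,Ab)`), and `G` an abelian group. Then
`L(X, G) ≅ G^{⊕ π₀(X)}`, the direct sum of copies of `G` indexed by the connected components
of `X`, where `G` also denotes the constant sheaf with value `G`. -/
theorem cosections_constant_sheaf (X : TopCat.{u}) [LocallyConnectedSpace X]
    (L : TopCat.Sheaf AddCommGrpCat.{u} X ⥤ AddCommGrpCat.{u})
    (adj : L ⊣ constantSheaf (Opens.grothendieckTopology X) AddCommGrpCat.{u})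
    (G : AddCommGrpCat.{u}) :
    Nonempty (L.obj ((constantSheaf (Opens.grothendieckTopology X) AddCommGrpCat.{u}).obj G) ≅
      AddCommGrpCat.of (⨁ (_ : ConnectedComponents X), G)) := by
  classical
  let adjΓ := (constantSheafAdj _ _ (isTerminalTop : IsTerminal (⊤ : Opens X))).comp adj
  let corep := (adjΓ.corepresentableBy G).ofIso
    (Functor.isoWhiskerRight (TopCat.constantSheafSectionsIso X) _)
  exact ⟨corep.uniqueUpToIso (AddCommGrpCat.directSumCorepresentableBy _ G)⟩
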